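/- For a natural number n > 1, the nonzero roots of C_n are exactly the solutions of z^n = (-3 + √(8n+1))/(4n) or z^n = (-3 - √(8n+1))/(4n). In particular, if n is even, C_n has exactly two nonzero real roots (of equal modulus and opposite sign), and if n is odd, C_n has exactly two nonzero real roots, one positive and one negative. -/

import Mathlib

/-!
Writing `w = z ^ n`, the numerator of `Cn n z` is `n z^{n+1} · cnQuad n w` with
`cnQuad n w = 2n²w² + 3nw - n + 1`, a quadratic of discriminant `n²(8n+1)` whose roots are
`(-3 ± √(8n+1))/(4n)`. Since `cnQuad n w = (2nw + 1)(nw + 1) - n`, no root of it is a pole of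
`Cn n`, and for `n > 1` none is `0`; so the nonzero roots of `Cn n` are exactly the `z` with
`cnQuad n (z ^ n) = 0`. For real `z` this means `z ^ n = a` or `z ^ n = b` for the roots
`a > 0 > b`, and the real `n`-th roots of `a` and `b` are counted by the parity of `n`.
-/

/-- The rational map given by the Chebyshev's method applied to `z·e^{z^n}`. -/
noncomputable def Cn (n : ℕ) (z : ℂ) : ℂ :=
  (n:ℂ) * z^(n+1) * (2*(n:ℂ)^2*z^(2*n) + 3*(n:ℂ)*z^n - (n:ℂ) + 1) /
    (2 * ((n:ℂ)*z^n + 1)^3)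

open Complex

def cnQuad {K : Type*} [CommRing K] (n : ℕ) (w : K) : K :=
  2 * (n : K) ^ 2 * w ^ 2 + 3 * n * w - n + 1

theorem cnQuad_eq_zero_iff {K : Type*} [Field K] [NeZero (2 : K)] {n : ℕ} (hn : (n : K) ≠ 0)
    {s : K} (hs : s * s = 8 * n + 1) (w : K) :
    cnQuad n w = 0 ↔ w = (-3 + s) / (4 * n) ∨ w = (-3 - s) / (4 * n) := by
  have hdiscrim : discrim (2 * (n : K) ^ 2) (3 * n : K) (1 - n : K) = (n * s) * (n * s) := by
    rw [discrim]; linear_combination (n : K) ^ 2 * hs.symm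
  have hquadratic := quadratic_eq_zero_iff (mul_ne_zero two_ne_zero (pow_ne_zero 2 hn)) hdiscrim w
  have h4 : (4 : K) ≠ 0 := by
    rw [show (4 : K) = 2 * 2 by norm_num]; exact mul_ne_zero two_ne_zero two_ne_zero
  have hplus : (-(3 * n) + n * s) / (2 * (2 * (n : K) ^ 2)) = (-3 + s) / (4 * n) := by
    field_simp; ring
  have hminus : (-(3 * n) - n * s) / (2 * (2 * (n : K) ^ 2)) = (-3 - s) / (4 * n) := by
    field_simp; ring
  rw [hplus, hminus] at hquadratic
  rw [← hquadratic, cnQuad]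
  ring_nf

theorem natCast_mul_add_one_ne_zero_of_cnQuad_eq_zero {K : Type*} [CommRing K] {n : ℕ}
    (hn : (n : K) ≠ 0) {w : K} (hw : cnQuad n w = 0) : (n : K) * w + 1 ≠ 0 := by
  intro hpole
  apply hn
  rw [cnQuad] at hw
  linear_combination (2 * n * w + 1) * hpole - hw

theorem Cn_eq_zero_iff {n : ℕ} (hn : n ≠ 0) {z : ℂ} (hz : z ≠ 0)
    (hpole : (n : ℂ) * z ^ n + 1 ≠ 0) : Cn n z = 0 ↔ cnQuad n (z ^ n) = 0 := by
  have hprefactor : (n : ℂ) * z ^ (n + 1) ≠ 0 :=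
    mul_ne_zero (Nat.cast_ne_zero.2 hn) (pow_ne_zero _ hz)
  have hdenom : 2 * ((n : ℂ) * z ^ n + 1) ^ 3 ≠ 0 := mul_ne_zero two_ne_zero (pow_ne_zero 3 hpole)
  rw [Cn, div_eq_zero_iff, or_iff_left hdenom, mul_eq_zero, or_iff_right hprefactor, cnQuad,
    ← pow_mul']

theorem cnQuad_pow_eq_zero_iff {n : ℕ} (hn : 1 < n) (z : ℂ) :
    cnQuad n (z ^ n) = 0 ↔ z ≠ 0 ∧ (n : ℂ) * z ^ n + 1 ≠ 0 ∧ Cn n z = 0 := by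
  refine ⟨fun hq => ?_, fun ⟨hz, hpole, hCn⟩ => (Cn_eq_zero_iff (by omega) hz hpole).1 hCn⟩
  have hz : z ≠ 0 := by
    rintro rfl
    rw [zero_pow (by omega), cnQuad] at hq
    have hn1 : (n : ℂ) = 1 := by linear_combination -hq
    exact hn.ne' (by exact_mod_cast hn1)
  have hpole := natCast_mul_add_one_ne_zero_of_cnQuad_eq_zero (Nat.cast_ne_zero.2 (by omega)) hq
  exact ⟨hz, hpole, (Cn_eq_zero_iff (by omega) hz hpole).2 hq⟩

@[simp, norm_cast]
theorem ofReal_cnQuad (n : ℕ) (x : ℝ) : ((cnQuad n x : ℝ) : ℂ) = cnQuad n (x : ℂ) := by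
  push_cast [cnQuad]; rfl

theorem exists_cnQuad_roots_real {n : ℕ} (hn : 1 < n) :
    ∃ a b : ℝ, 0 < a ∧ b < 0 ∧ ∀ w, cnQuad n w = 0 ↔ w = a ∨ w = b := by
  have hn1 : (1 : ℝ) < n := by exact_mod_cast hn
  have hs := Real.mul_self_sqrt (by positivity : (0 : ℝ) ≤ 8 * n + 1)
  have hs3 : 3 < √(8 * n + 1) := by rw [Real.lt_sqrt (by norm_num)]; linarith
  exact ⟨_, _, div_pos (by linarith) (by positivity),
    div_neg_of_neg_of_pos (by linarith) (by positivity), cnQuad_eq_zero_iff (by positivity) hs⟩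

theorem Real.exists_pos_pow_eq {n : ℕ} (hn : n ≠ 0) {a : ℝ} (ha : 0 < a) :
    ∃ x, 0 < x ∧ x ^ n = a :=
  ⟨a ^ (n⁻¹ : ℝ), Real.rpow_pos_of_pos ha _, Real.rpow_inv_natCast_pow ha.le hn⟩

section OrderedRing

variable {R : Type*} [Ring R] [LinearOrder R] [IsStrictOrderedRing R] {n : ℕ}

theorem Even.setOf_pow_eq_pow (hn : Even n) (hn0 : n ≠ 0) (x : R) :
    {y : R | y ^ n = x ^ n} = {x, -x} := by
  ext y; simp [pow_eq_pow_iff_of_ne_zero hn0, hn]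

theorem Even.setOf_pow_eq_of_neg (hn : Even n) {b : R} (hb : b < 0) : {y : R | y ^ n = b} = ∅ :=
  Set.eq_empty_of_forall_notMem fun y hy => (hn.pow_nonneg y).not_gt (hy ▸ hb)

theorem Odd.setOf_pow_eq_pow (hn : Odd n) (x : R) : {y : R | y ^ n = x ^ n} = {x} := by
  ext y; simp [hn.pow_inj]

end OrderedRing

/-- For `n > 1`, the nonzero roots of `C_n` are exactly the solutions of
`z^n = (-3 ± √(8n+1))/(4n)`. If `n` is even, `C_n` has exactly two nonzero real
roots, of equal modulus and opposite sign; if `n` is odd, it has exactly two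
nonzero real roots, one positive and one negative. -/
theorem Cn_nonzero_roots (n : ℕ) (hn : 1 < n) :
    (∀ z : ℂ, z ≠ 0 → (n:ℂ)*z^n + 1 ≠ 0 →
      (Cn n z = 0 ↔
        z^n = ((-3 + (Real.sqrt (8*n+1) : ℂ)) / (4*(n:ℂ))) ∨
        z^n = ((-3 - (Real.sqrt (8*n+1) : ℂ)) / (4*(n:ℂ))))) ∧
    (Even n → ∃ x : ℝ, 0 < x ∧
      {y : ℝ | y ≠ 0 ∧ (n:ℂ)*(y:ℂ)^n + 1 ≠ 0 ∧ Cn n (y:ℂ) = 0} = {x, -x}) ∧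
    (Odd n → ∃ x y : ℝ, 0 < x ∧ y < 0 ∧
      {t : ℝ | t ≠ 0 ∧ (n:ℂ)*(t:ℂ)^n + 1 ≠ 0 ∧ Cn n (t:ℂ) = 0} = {x, y}) := by
  have hn0 : n ≠ 0 := by omega
  have hsqrt : (√(8 * n + 1) : ℂ) * √(8 * n + 1) = 8 * n + 1 := by
    rw [← ofReal_mul, Real.mul_self_sqrt (by positivity)]; push_cast; rfl
  obtain ⟨a, b, ha, hb, hroots⟩ := exists_cnQuad_roots_real hn
  obtain ⟨x, hx, rfl⟩ := Real.exists_pos_pow_eq hn0 ha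
  have hset : {y : ℝ | y ≠ 0 ∧ (n:ℂ)*(y:ℂ)^n + 1 ≠ 0 ∧ Cn n (y:ℂ) = 0} =
      {y | y ^ n = x ^ n} ∪ {y | y ^ n = b} := by
    ext y
    have hcast : cnQuad n ((y : ℂ) ^ n) = 0 ↔ cnQuad n (y ^ n) = 0 := by
      rw [← ofReal_pow, ← ofReal_cnQuad, ofReal_eq_zero]
    change _ ∧ _ ↔ y ^ n = x ^ n ∨ y ^ n = b
    rw [← hroots, ← hcast, cnQuad_pow_eq_zero_iff hn, ofReal_ne_zero]
  refine ⟨fun z hz hpole => ?_, fun he => ⟨x, hx, ?_⟩, fun ho => ?_⟩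
  · rw [Cn_eq_zero_iff hn0 hz hpole, cnQuad_eq_zero_iff (Nat.cast_ne_zero.2 hn0) hsqrt]
  · rw [hset, he.setOf_pow_eq_pow hn0, he.setOf_pow_eq_of_neg hb, Set.union_empty]
  · obtain ⟨c, hc, hcb⟩ := Real.exists_pos_pow_eq hn0 (neg_pos.2 hb)
    have hb' : b = (-c) ^ n := by rw [ho.neg_pow, hcb, neg_neg]
    refine ⟨x, -c, hx, neg_neg_of_pos hc, ?_⟩
    rw [hset, hb', ho.setOf_pow_eq_pow, ho.setOf_pow_eq_pow, Set.singleton_union]
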